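/- If M is a loopless matroid on E with rank(M) ≥ 2, then its truncation τ(M) is a connected matroid: any two distinct elements of E lie in a common circuit of τ(M). -/

import Mathlib

/-!
If some basis `B` of `M` contains both `e` and `f`, then `B` is a circuit of `τ(M)`: it has
`rank M` elements, while each proper subset has fewer and so extends inside `B` to a basis of
`τ(M)`. Otherwise `{e, f}` is dependent in `τ(M)`, whereas its proper subsets are independent
there, since `e` and `f` are not loops and `rank M - 1 ≥ 1`.
-/

open Classical

/-- A matroid on a finite ground set `E`, presented by its nonempty collection of bases,
which satisfies the basis exchange axiom. -/
structure FinMatroid (α : Type*) [DecidableEq α] where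
  E : Finset α
  bases : Finset (Finset α)
  bases_nonempty : bases.Nonempty
  subset_ground : ∀ B ∈ bases, B ⊆ E
  exchange : ∀ B ∈ bases, ∀ B' ∈ bases, ∀ e ∈ B \ B',
      ∃ f ∈ B' \ B, insert f (B.erase e) ∈ bases

variable {α : Type*} [DecidableEq α]

/-- Independence with respect to a collection `𝓑` of bases: being contained in a basis. -/
def Indep (𝓑 : Finset (Finset α)) (I : Finset α) : Prop := ∃ B ∈ 𝓑, I ⊆ B

/-- The rank of a collection of bases: the (common) cardinality of the bases. -/
def dataRank (𝓑 : Finset (Finset α)) : ℕ := 𝓑.sup Finset.card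

/-- The rank of a subset `A`: the maximal size of its intersection with a basis. -/
def dataRankOf (𝓑 : Finset (Finset α)) (A : Finset α) : ℕ := 𝓑.sup fun B => (B ∩ A).card

/-- Circuits: the minimal dependent subsets of the ground set. -/
def IsCircuit (E : Finset α) (𝓑 : Finset (Finset α)) (C : Finset α) : Prop :=
  C ⊆ E ∧ ¬ Indep 𝓑 C ∧ ∀ D ⊂ C, Indep 𝓑 D

/-- A loop: an element lying in no basis. -/
def IsLoop (𝓑 : Finset (Finset α)) (e : α) : Prop := ∀ B ∈ 𝓑, e ∉ B

/-- A coloop: an element lying in every basis. -/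
def IsColoop (𝓑 : Finset (Finset α)) (e : α) : Prop := ∀ B ∈ 𝓑, e ∈ B

/-- A handle: a nonempty subset of the ground set which every circuit
either avoids entirely or contains entirely. -/
def IsHandle (E : Finset α) (𝓑 : Finset (Finset α)) (H : Finset α) : Prop :=
  H.Nonempty ∧ H ⊆ E ∧ ∀ C, IsCircuit E 𝓑 C → Disjoint H C ∨ H ⊆ C

/-- The rank of a matroid: the common cardinality of its bases. -/
def FinMatroid.rank (M : FinMatroid α) : ℕ := dataRank M.bases

/-- The bases of the deletion matroid `M \ H`: the maximal `M`-independent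
subsets of `E ∖ H`. -/
noncomputable def deleteBases (M : FinMatroid α) (H : Finset α) : Finset (Finset α) :=
  ((M.E \ H).powerset.filter fun I => Indep M.bases I).filter
    fun I => ∀ J ∈ (M.E \ H).powerset, Indep M.bases J → I ⊆ J → I = J

/-- The bases of the contraction matroid `M / H` (for `H` independent):
the sets `B \ H` where `B` is a basis of `M` containing `H`. -/
noncomputable def contractBases (M : FinMatroid α) (H : Finset α) : Finset (Finset α) :=
  (M.bases.filter fun B => H ⊆ B).image fun B => B \ H

/-- `𝓑N` is a quotient of `𝓑M` (on the common ground set `E`):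
every circuit of `M` is a union of circuits of `N`. -/
def IsQuotientData (E : Finset α) (𝓑N 𝓑M : Finset (Finset α)) : Prop :=
  ∀ C, IsCircuit E 𝓑M C →
    ∃ 𝒞 : Finset (Finset α), (∀ D ∈ 𝒞, IsCircuit E 𝓑N D) ∧ C = 𝒞.sup id

/-- The bases of the truncation `τ(M)`: the independent sets of `M`
of cardinality exactly `rank M - 1`. -/
noncomputable def truncBases (M : FinMatroid α) : Finset (Finset α) :=
  M.E.powerset.filter fun I => Indep M.bases I ∧ I.card = M.rank - 1

/-- The matroid basis polynomial `Ψ = ∑_{B basis} x^B`. -/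
noncomputable def basisPoly (K : Type*) [CommRing K] (𝓑 : Finset (Finset α)) :
    MvPolynomial α K :=
  ∑ B ∈ 𝓑, ∏ e ∈ B, MvPolynomial.X e

/-- The multivariate Tutte polynomial
`Z = ∑_{A ⊆ E} p^(rank - rank A) x^A`, an element of `K[p][x_e : e ∈ E]`. -/
noncomputable def tutte (K : Type*) [CommRing K] (E : Finset α) (𝓑 : Finset (Finset α)) :
    MvPolynomial α (Polynomial K) :=
  ∑ A ∈ E.powerset,
    MvPolynomial.C (Polynomial.X ^ (dataRank 𝓑 - dataRankOf 𝓑 A)) * ∏ a ∈ A, MvPolynomial.X a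

/-- A polynomial with coefficient function `c` supported on the bases `𝓑`:
`∑_{B ∈ 𝓑} c_B x^B`. -/
noncomputable def msp (K : Type*) [CommRing K] (𝓑 : Finset (Finset α)) (c : Finset α → K) :
    MvPolynomial α K :=
  ∑ B ∈ 𝓑, MvPolynomial.C (c B) * ∏ e ∈ B, MvPolynomial.X e

theorem Indep.subset {β : Type*} {𝓑 : Finset (Finset β)} {I J : Finset β} (hJ : Indep 𝓑 J)
    (hIJ : I ⊆ J) : Indep 𝓑 I :=
  let ⟨B, hB, hJB⟩ := hJ
  ⟨B, hB, hIJ.trans hJB⟩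

namespace FinMatroid

variable (M : FinMatroid α)

theorem exchangeProperty :
    Matroid.ExchangeProperty fun X : Set α => ∃ B ∈ M.bases, (B : Set α) = X := by
  rintro _ _ ⟨B, hB, rfl⟩ ⟨B', hB', rfl⟩ a ha
  obtain ⟨b, hb, hbB⟩ := M.exchange B hB B' hB' a (by simpa using ha)
  exact ⟨b, by simpa using hb, _, hbB, by simp⟩

theorem card_eq_rank {B : Finset α} (hB : B ∈ M.bases) : B.card = M.rank := by
  refine le_antisymm (Finset.le_sup hB) (Finset.sup_le fun B' hB' => ?_)
  have := M.exchangeProperty.encard_isBase_eq ⟨B', hB', rfl⟩ ⟨B, hB, rfl⟩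
  simp only [Set.encard_coe_eq_coe_finsetCard, Nat.cast_inj] at this
  exact this.le

theorem exists_mem_bases_of_not_isLoop {e : α} (he : ¬ IsLoop M.bases e) :
    ∃ B ∈ M.bases, e ∈ B := by
  simpa [IsLoop] using he

theorem indep_of_indep_truncBases {I : Finset α} (hI : Indep (truncBases M) I) :
    Indep M.bases I := by
  obtain ⟨T, hT, hIT⟩ := hI
  exact (Finset.mem_filter.mp hT).2.1.subset hIT

theorem indep_truncBases_of_subset {B D : Finset α} (hB : B ∈ M.bases) (hDB : D ⊆ B)
    (hD : D.card < M.rank) : Indep (truncBases M) D := by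
  have hBr := M.card_eq_rank hB
  obtain ⟨T, hDT, hTB, hT⟩ :=
    Finset.exists_subsuperset_card_eq hDB (n := M.rank - 1) (by omega) (by omega)
  refine ⟨T, ?_, hDT⟩
  rw [truncBases, Finset.mem_filter, Finset.mem_powerset]
  exact ⟨hTB.trans (M.subset_ground B hB), ⟨B, hB, hTB⟩, hT⟩

theorem indep_truncBases_singleton (hr : 2 ≤ M.rank) {e : α} (he : ¬ IsLoop M.bases e) :
    Indep (truncBases M) {e} := by
  obtain ⟨B, hB, heB⟩ := M.exists_mem_bases_of_not_isLoop he
  refine M.indep_truncBases_of_subset hB (Finset.singleton_subset_iff.mpr heB) ?_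
  rw [Finset.card_singleton]
  omega

theorem isCircuit_truncBases_of_mem_bases (hr : 0 < M.rank) {B : Finset α}
    (hB : B ∈ M.bases) : IsCircuit M.E (truncBases M) B := by
  refine ⟨M.subset_ground B hB, ?_, fun D hD => ?_⟩
  · rintro ⟨T, hT, hBT⟩
    have := Finset.card_le_card hBT
    rw [M.card_eq_rank hB, (Finset.mem_filter.mp hT).2.2] at this
    omega
  · exact M.indep_truncBases_of_subset hB hD.subset
      (M.card_eq_rank hB ▸ Finset.card_lt_card hD)

theorem isCircuit_truncBases_pair (hr : 2 ≤ M.rank) {e f : α} (he : ¬ IsLoop M.bases e)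
    (hf : ¬ IsLoop M.bases f) (hef : ¬ ∃ B ∈ M.bases, e ∈ B ∧ f ∈ B) :
    IsCircuit M.E (truncBases M) {e, f} := by
  obtain ⟨Be, hBe, heBe⟩ := M.exists_mem_bases_of_not_isLoop he
  obtain ⟨Bf, hBf, hfBf⟩ := M.exists_mem_bases_of_not_isLoop hf
  refine ⟨?_, fun hpair => ?_, fun D hD => ?_⟩
  · rw [Finset.insert_subset_iff, Finset.singleton_subset_iff]
    exact ⟨M.subset_ground Be hBe heBe, M.subset_ground Bf hBf hfBf⟩
  · obtain ⟨B, hB, hefB⟩ := M.indep_of_indep_truncBases hpair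
    exact hef ⟨B, hB, hefB (by simp), hefB (by simp)⟩
  · have : D ⊆ {e} ∨ D ⊆ {f} := by
      have := hD.subset
      grind
    rcases this with hDe | hDf
    · exact (M.indep_truncBases_singleton hr he).subset hDe
    · exact (M.indep_truncBases_singleton hr hf).subset hDf

end FinMatroid

theorem stmt8 {α : Type*} [DecidableEq α] (M : FinMatroid α)
    (hl : ∀ e ∈ M.E, ¬ IsLoop M.bases e) (hr : 2 ≤ M.rank) :
    ∀ e ∈ M.E, ∀ f ∈ M.E, e ≠ f →
      ∃ C, IsCircuit M.E (truncBases M) C ∧ e ∈ C ∧ f ∈ C := by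
  intro e he f hf _
  by_cases hB : ∃ B ∈ M.bases, e ∈ B ∧ f ∈ B
  · obtain ⟨B, hB, heB, hfB⟩ := hB
    exact ⟨B, M.isCircuit_truncBases_of_mem_bases (by omega) hB, heB, hfB⟩
  · exact ⟨{e, f}, M.isCircuit_truncBases_pair hr (hl e he) (hl f hf) hB, by simp, by simp⟩
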